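/- Let $z^1,\dots,z^n,\tilde z^1,\dots,\tilde z^n \in [0,1]$ with $z^i \neq z^j$ and $\tilde z^i \neq \tilde z^j$ for $i < j$, and suppose $(z^i - z^j)(\tilde z^i - \tilde z^j) > 0$. Then for $i < j$: $\left[\frac{z^i(1-z^j)+z^j(1-z^i)}{z^i-z^j}-\frac{\tilde z^i(1-\tilde z^j)+\tilde z^j(1-\tilde z^i)}{\tilde z^i-\tilde z^j}\right](\mathrm{sgn}(z^i-\tilde z^i)-\mathrm{sgn}(z^j-\tilde z^j)) \leq 0$, where $\mathrm{sgn}(x)=1$ if $x>0$ and $\mathrm{sgn}(x)=-1$ if $x\leq 0$. -/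
import Mathlib

open Set

/-- The sign function used in the pathwise uniqueness proof:
`sgn x = 1` if `x > 0` and `sgn x = -1` if `x ≤ 0`. -/
noncomputable def sgn' (x : ℝ) : ℝ := if 0 < x then 1 else -1

/-- Key algebraic inequality in the pathwise uniqueness proof of the beta-Jacobi
system: the interaction drift difference paired with the difference of signs is
nonpositive. -/
theorem jacobi_uniqueness_sign_inequality (zi zj zi' zj' : ℝ)
    (hzi : zi ∈ Icc (0:ℝ) 1) (hzj : zj ∈ Icc (0:ℝ) 1)
    (hzi' : zi' ∈ Icc (0:ℝ) 1) (hzj' : zj' ∈ Icc (0:ℝ) 1)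
    (hne : zi ≠ zj) (hne' : zi' ≠ zj')
    (hsgn : 0 < (zi - zj) * (zi' - zj')) :
    ((zi * (1 - zj) + zj * (1 - zi)) / (zi - zj)
        - (zi' * (1 - zj') + zj' * (1 - zi')) / (zi' - zj'))
      * (sgn' (zi - zi') - sgn' (zj - zj')) ≤ 0 := by
  obtain ⟨hzi0, hzi1⟩ := hzi
  obtain ⟨hzj0, hzj1⟩ := hzj
  obtain ⟨hzi'0, hzi'1⟩ := hzi'
  obtain ⟨hzj'0, hzj'1⟩ := hzj'
  have hd : zi - zj ≠ 0 := sub_ne_zero.mpr hne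
  have hd' : zi' - zj' ≠ 0 := sub_ne_zero.mpr hne'
  have key : (zi * (1 - zj) + zj * (1 - zi)) / (zi - zj)
        - (zi' * (1 - zj') + zj' * (1 - zi')) / (zi' - zj')
      = (2 * ((zj - zj') * (zi' * (1 - zi)) - (zi - zi') * (zj' * (1 - zj))))
        / ((zi - zj) * (zi' - zj')) := by
    field_simp
    ring
  rw [key]
  unfold sgn'
  split_ifs with h1 h2 h2
  · simp
  · push_neg at h2
    have hN : (2 * ((zj - zj') * (zi' * (1 - zi)) - (zi - zi') * (zj' * (1 - zj)))) ≤ 0 := by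
      nlinarith [mul_nonneg hzi'0 (sub_nonneg.mpr hzi1), mul_nonneg hzj'0 (sub_nonneg.mpr hzj1)]
    have h := div_nonpos_of_nonpos_of_nonneg hN hsgn.le
    linarith
  · push_neg at h1
    have hN : 0 ≤ (2 * ((zj - zj') * (zi' * (1 - zi)) - (zi - zi') * (zj' * (1 - zj)))) := by
      nlinarith [mul_nonneg hzi'0 (sub_nonneg.mpr hzi1), mul_nonneg hzj'0 (sub_nonneg.mpr hzj1)]
    have h := div_nonneg hN hsgn.le
    linarith
  · simp
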